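/- arXiv:2108.01762 — 3 statements merged into one kernel-verified Lean document; each statement's English description precedes it below -/
import Mathlib

section
/- Let ρ be a primitive, compactly bijective substitution of constant length L on a compact Hausdorff space 𝒜, let 𝒢 be the closure in Homeo(𝒜) of the subgroup generated by the columns, and fix a basepoint p ∈ 𝒜. Then the stabiliser H = {g ∈ 𝒢 : g(p) = p} is a compact subgroup of 𝒢, and the map φ : 𝒢/H → 𝒜 defined by φ([g]) = g(p) is a well-defined homeomorphism which intertwines the left-multiplication action of 𝒢 on 𝒢/H with the evaluation action of 𝒢 on 𝒜, i.e. φ([hg]) = h(φ([g])) for all h, g ∈ 𝒢. -/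
/-- The group of self-homeomorphisms of a space, with `(f * g) x = f (g x)`. -/
instance homeoGroup {X : Type*} [TopologicalSpace X] : Group (X ≃ₜ X) where
  mul f g := g.trans f
  one := Homeomorph.refl X
  inv := Homeomorph.symm
  mul_assoc f g h := Homeomorph.ext fun x => rfl
  one_mul f := Homeomorph.ext fun x => rfl
  mul_one f := Homeomorph.ext fun x => rfl
  inv_mul_cancel f := Homeomorph.ext fun x => f.symm_apply_apply x

/-- The compact-open topology on the group of self-homeomorphisms, induced
from the compact-open topology on `C(X, X)`. -/
noncomputable instance homeoCompactOpen {X : Type*} [TopologicalSpace X] :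
    TopologicalSpace (X ≃ₜ X) :=
  TopologicalSpace.induced
    (fun g : X ≃ₜ X => (⟨g, g.continuous⟩ : C(X, X)))
    ContinuousMap.compactOpen

/-- The setoid on `𝒢` identifying `g ∼ g'` iff `g(p) = g'(p)`; for the
stabiliser `H` of `p`, this is exactly the left-coset equivalence of `H`, so
its quotient realises the coset space `𝒢/H` (with the quotient topology). -/
def evSetoid {X : Type*} [TopologicalSpace X] (G : Set (X ≃ₜ X)) (p : X) :
    Setoid {g : X ≃ₜ X // g ∈ G} :=
  ⟨fun g g' => g.1 p = g'.1 p, ⟨fun _ => rfl, Eq.symm, Eq.trans⟩⟩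


/-!
Primitivity makes every orbit of the group generated by the columns dense. The closure `𝒢` is a
compact topological group, so its orbits are compact, hence closed, hence everything: `𝒢` acts
transitively. The orbit map `g ↦ g p₀` is then a continuous bijection from the compact space
`𝒢/H` onto the Hausdorff space `𝒜`, hence a homeomorphism.
-/

open Set MulAction

lemma List.prod_map_smul {M α ι : Type*} [Monoid M] [MulAction M α] (f : ι → M) (l : List ι)
    (a : α) : (l.map f).prod • a = l.foldr (fun j b => f j • b) a := by
  induction l with
  | nil => exact one_smul M a
  | cons j l ih => rw [List.map_cons, List.prod_cons, mul_smul, ih, List.foldr_cons]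

namespace Homeomorph

variable {X : Type*} [TopologicalSpace X]

lemma continuous_toContinuousMap : Continuous (toContinuousMap : (X ≃ₜ X) → C(X, X)) :=
  continuous_induced_dom

lemma continuous_apply_const (x : X) : Continuous fun g : X ≃ₜ X => g x :=
  (continuous_eval_const (F := C(X, X)) x).comp continuous_toContinuousMap

instance : MulAction (X ≃ₜ X) X where
  smul g x := g x
  one_smul _ := rfl
  mul_smul _ _ _ := rfl

lemma mapsTo_symm_iff (g : X ≃ₜ X) {K U : Set X} :
    MapsTo g.symm K U ↔ MapsTo g Uᶜ Kᶜ := by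
  constructor
  · intro h x hx hgx
    exact hx (by simpa using h hgx)
  · intro h x hx
    by_contra hU
    exact h hU (by simpa using hx)

instance [LocallyCompactSpace X] : ContinuousMul (X ≃ₜ X) where
  continuous_mul := continuous_induced_rng.2 <| ContinuousMap.continuous_comp'.comp <|
    (continuous_toContinuousMap.comp continuous_snd).prodMk
      (continuous_toContinuousMap.comp continuous_fst)

variable [CompactSpace X] [T2Space X]

instance : ContinuousInv (X ≃ₜ X) where
  continuous_inv := continuous_induced_rng.2 <| ContinuousMap.continuous_compactOpen.2
    fun K hK U hU => by
      show IsOpen {g : X ≃ₜ X | MapsTo g.symm K U}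
      simp_rw [mapsTo_symm_iff]
      exact (ContinuousMap.isOpen_setOfPred_mapsTo hU.isClosed_compl.isCompact
        hK.isClosed.isOpen_compl).preimage continuous_toContinuousMap

instance : IsTopologicalGroup (X ≃ₜ X) where

end Homeomorph

section

variable {X : Type*} [TopologicalSpace X]

/-- The letters of `ρ^p(a)` for the bijective substitution with columns `ρ` are the points
`(ρ i₁ ∘ ⋯ ∘ ρ iₚ) a`. -/
def IsPrimitive {ι : Type*} (ρ : ι → X ≃ₜ X) : Prop :=
  ∀ U : Set X, IsOpen U → U.Nonempty →
    ∃ p : ℕ, 1 ≤ p ∧ ∀ a : X, ∃ i : Fin p → ι,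
      (List.ofFn i).foldr (fun j x => ρ j x) a ∈ U

theorem IsPrimitive.isMinimal {ι : Type*} {ρ : ι → X ≃ₜ X} (hρ : IsPrimitive ρ) :
    IsMinimal (Subgroup.closure (range ρ)) X where
  dense_orbit x := dense_iff_inter_open.2 fun U hU hne => by
    obtain ⟨p, -, hp⟩ := hρ U hU hne
    obtain ⟨i, hi⟩ := hp x
    have hmem : ((List.ofFn i).map ρ).prod ∈ Subgroup.closure (range ρ) :=
      list_prod_mem fun g hg => by
        obtain ⟨j, -, rfl⟩ := List.mem_map.1 hg
        exact Subgroup.subset_closure (mem_range_self j)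
    exact ⟨_, hi, ⟨_, hmem⟩, List.prod_map_smul ρ (List.ofFn i) x⟩

theorem isPretransitive_of_isMinimal_of_isCompact [T2Space X] {S K : Subgroup (X ≃ₜ X)}
    [IsMinimal S X] (hSK : S ≤ K) (hK : IsCompact (K : Set (X ≃ₜ X))) :
    IsPretransitive K X := by
  have : CompactSpace K := isCompact_iff_compactSpace.1 hK
  refine ⟨fun x y => mem_orbit_iff.1 ?_⟩
  have hclosed : IsClosed (orbit K x) :=
    (isCompact_range
      ((Homeomorph.continuous_apply_const x).comp continuous_subtype_val)).isClosed
  have hdense : Dense (orbit K x) :=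
    (dense_orbit S x).mono <| by
      rintro _ ⟨g, rfl⟩
      exact ⟨⟨g, hSK g.2⟩, rfl⟩
  rw [← hclosed.closure_eq, hdense.closure_eq]
  exact mem_univ y

theorem evSetoid_mk_eq_iff (K : Subgroup (X ≃ₜ X)) (p : X)
    (g g' : {g : X ≃ₜ X // g ∈ (K : Set (X ≃ₜ X))}) :
    Quotient.mk (evSetoid K p) g = Quotient.mk (evSetoid K p) g' ↔
      ∃ h ∈ K ⊓ stabilizer (X ≃ₜ X) p, g'.1 = g.1 * h := by
  rw [Quotient.eq]
  constructor
  · intro h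
    refine ⟨g.1⁻¹ * g'.1, Subgroup.mem_inf.2 ⟨K.mul_mem (K.inv_mem g.2) g'.2, ?_⟩,
      (mul_inv_cancel_left _ _).symm⟩
    show g.1.symm (g'.1 p) = p
    rw [← show g.1 p = g'.1 p from h, Homeomorph.symm_apply_apply]
  · rintro ⟨h, ⟨-, hh⟩, hg'⟩
    show g.1 p = g'.1 p
    rw [hg']
    exact congrArg g.1 hh.symm

noncomputable def quotientEvSetoidHomeomorph [T2Space X] {G : Set (X ≃ₜ X)} {p : X}
    (hG : IsCompact G) (hsurj : Function.Surjective fun g : G => g.1 p) :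
    Quotient (evSetoid G p) ≃ₜ X :=
  have : CompactSpace G := isCompact_iff_compactSpace.1 hG
  let φ : Quotient (evSetoid G p) → X := Quotient.lift (fun g : G => g.1 p) fun _ _ => id
  have hinj : Function.Injective φ := fun q q' =>
    Quotient.inductionOn₂ q q' fun _ _ h => Quotient.sound h
  have hcont : Continuous φ :=
    ((Homeomorph.continuous_apply_const p).comp continuous_subtype_val).quotient_lift _
  Continuous.homeoOfEquivCompactToT2
    (f := .ofBijective φ ⟨hinj, Quotient.lift_surjective _ _ hsurj⟩) hcont

end

theorem stabiliser_coset_homeomorphism_general {X : Type*} [TopologicalSpace X]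
    [CompactSpace X] [T2Space X]
    (L : ℕ) (ρ : Fin L → (X ≃ₜ X))
    (hprim : ∀ U : Set X, IsOpen U → U.Nonempty →
      ∃ p : ℕ, 1 ≤ p ∧ ∀ a : X, ∃ i : Fin p → Fin L,
        (List.ofFn i).foldr (fun j x => ρ j x) a ∈ U)
    (G : Set (X ≃ₜ X))
    (hG : G = closure ((Subgroup.closure (Set.range ρ) : Subgroup (X ≃ₜ X)) :
      Set (X ≃ₜ X)))
    (hGcpt : IsCompact G)
    (p₀ : X) :
    ∃ H : Subgroup (X ≃ₜ X),
      (H : Set (X ≃ₜ X)) = {g : X ≃ₜ X | g ∈ G ∧ g p₀ = p₀} ∧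
      IsCompact (H : Set (X ≃ₜ X)) ∧
      ∃ φ : Quotient (evSetoid G p₀) ≃ₜ X,
        (∀ g : {g : X ≃ₜ X // g ∈ G},
          φ (Quotient.mk (evSetoid G p₀) g) = g.1 p₀) ∧
        (∀ g g' : {g : X ≃ₜ X // g ∈ G},
          Quotient.mk (evSetoid G p₀) g = Quotient.mk (evSetoid G p₀) g' ↔
            ∃ h ∈ H, g'.1 = g.1 * h) ∧
        (∀ h g k : {g : X ≃ₜ X // g ∈ G}, k.1 = h.1 * g.1 →
          φ (Quotient.mk (evSetoid G p₀) k) =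
            h.1 (φ (Quotient.mk (evSetoid G p₀) g))) := by
  obtain ⟨K, hCK, rfl⟩ : ∃ K : Subgroup (X ≃ₜ X),
      Subgroup.closure (range ρ) ≤ K ∧ (K : Set (X ≃ₜ X)) = G :=
    ⟨_, Subgroup.le_topologicalClosure _, hG ▸ Subgroup.topologicalClosure_coe⟩
  have : IsMinimal (Subgroup.closure (range ρ)) X := IsPrimitive.isMinimal hprim
  have : IsPretransitive K X := isPretransitive_of_isMinimal_of_isCompact hCK hGcpt
  refine ⟨K ⊓ stabilizer (X ≃ₜ X) p₀, rfl, ?_,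
    quotientEvSetoidHomeomorph hGcpt (surjective_smul K p₀), fun _ => rfl,
    evSetoid_mk_eq_iff K p₀, fun h g k hk => congrArg (· p₀) hk⟩
  exact hGcpt.inter_right (isClosed_eq (Homeomorph.continuous_apply_const p₀) continuous_const)

/-- For a primitive, compactly bijective substitution `ρ` on
a compact Hausdorff space `X`, with `𝒢` the closure in `Homeo(X)` of the
subgroup generated by the columns and `p₀ ∈ X` a basepoint: the stabiliser
`H = {g ∈ 𝒢 : g p₀ = p₀}` is a compact subgroup, and
`φ : 𝒢/H → X, [g] ↦ g p₀` is a well-defined homeomorphism (where `[g] = [g']`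
iff `g' ∈ gH`) intertwining left multiplication with evaluation:
`φ([hg]) = h (φ [g])`. -/
theorem stabiliser_coset_homeomorphism {X : Type*} [TopologicalSpace X]
    [CompactSpace X] [T2Space X]
    (L : ℕ) (hL : 1 ≤ L) (ρ : Fin L → (X ≃ₜ X))
    (hprim : ∀ U : Set X, IsOpen U → U.Nonempty →
      ∃ p : ℕ, 1 ≤ p ∧ ∀ a : X, ∃ i : Fin p → Fin L,
        (List.ofFn i).foldr (fun j x => ρ j x) a ∈ U)
    (G : Set (X ≃ₜ X))
    (hG : G = closure ((Subgroup.closure (Set.range ρ) : Subgroup (X ≃ₜ X)) :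
      Set (X ≃ₜ X)))
    (hGcpt : IsCompact G)
    (p₀ : X) :
    ∃ H : Subgroup (X ≃ₜ X),
      (H : Set (X ≃ₜ X)) = {g : X ≃ₜ X | g ∈ G ∧ g p₀ = p₀} ∧
      IsCompact (H : Set (X ≃ₜ X)) ∧
      ∃ φ : Quotient (evSetoid G p₀) ≃ₜ X,
        (∀ g : {g : X ≃ₜ X // g ∈ G},
          φ (Quotient.mk (evSetoid G p₀) g) = g.1 p₀) ∧
        (∀ g g' : {g : X ≃ₜ X // g ∈ G},
          Quotient.mk (evSetoid G p₀) g = Quotient.mk (evSetoid G p₀) g' ↔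
            ∃ h ∈ H, g'.1 = g.1 * h) ∧
        (∀ h g k : {g : X ≃ₜ X // g ∈ G}, k.1 = h.1 * g.1 →
          φ (Quotient.mk (evSetoid G p₀) k) =
            h.1 (φ (Quotient.mk (evSetoid G p₀) g))) :=
  stabiliser_coset_homeomorphism_general L ρ hprim G hG hGcpt p₀
end

section
/- Let ρ be a primitive, compactly bijective substitution of constant length L on a compact Hausdorff space 𝒜, and suppose the closure 𝒢 in Homeo(𝒜) of the subgroup generated by the columns is abelian. Then the action of 𝒢 on 𝒜 is free and transitive; in particular, for every p ∈ 𝒜 the evaluation map 𝒢 → 𝒜, g ↦ g(p), is a homeomorphism, and under this identification every column of ρ acts on 𝒜 ≅ 𝒢 as a group translation. -/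
namespace Homeomorph

variable {X : Type*} [TopologicalSpace X]

theorem continuous_eval_const (a : X) : Continuous fun g : X ≃ₜ X => g a :=
  (ContinuousEvalConst.continuous_eval_const (F := C(X, X)) a).comp
    (continuous_induced_dom (f := fun g : X ≃ₜ X => (⟨g, g.continuous⟩ : C(X, X))))

theorem list_prod_map_apply {ι : Type*} (ρ : ι → X ≃ₜ X) (l : List ι) (a : X) :
    (l.map ρ).prod a = l.foldr (fun j x => ρ j x) a := by
  induction l with
  | nil => rfl
  | cons j t ih => simp only [List.map_cons, List.prod_cons, List.foldr_cons, ← ih]; rfl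

theorem dense_image_apply_closure_of_primitive {ι : Type*} (ρ : ι → X ≃ₜ X)
    (hprim : ∀ U : Set X, IsOpen U → U.Nonempty →
      ∃ p : ℕ, ∀ a : X, ∃ i : Fin p → ι, (List.ofFn i).foldr (fun j x => ρ j x) a ∈ U)
    (a : X) :
    Dense ((fun g : X ≃ₜ X => g a) '' (Subgroup.closure (Set.range ρ) : Set (X ≃ₜ X))) := by
  refine dense_iff_inter_open.mpr fun U hU hne => ?_
  obtain ⟨p, hp⟩ := hprim U hU hne
  obtain ⟨i, hi⟩ := hp a
  have hword : ((List.ofFn i).map ρ).prod ∈ Subgroup.closure (Set.range ρ) :=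
    list_prod_mem fun _ hx => by
      obtain ⟨j, _, rfl⟩ := List.mem_map.mp hx
      exact Subgroup.subset_closure ⟨j, rfl⟩
  exact ⟨_, by simpa only [list_prod_map_apply] using hi, _, hword, rfl⟩

theorem exists_mem_apply_eq_of_dense [T2Space X] {G S : Set (X ≃ₜ X)} (hG : IsCompact G)
    (hSG : S ⊆ G) {a : X} (hS : Dense ((fun g : X ≃ₜ X => g a) '' S)) (b : X) :
    ∃ g ∈ G, g a = b := by
  have hclosed : IsClosed ((fun g : X ≃ₜ X => g a) '' G) :=
    (hG.image (continuous_eval_const a)).isClosed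
  have hdense : Dense ((fun g : X ≃ₜ X => g a) '' G) := hS.mono (Set.image_mono hSG)
  obtain ⟨g, hg, hgb⟩ : b ∈ (fun g : X ≃ₜ X => g a) '' G := by
    rw [← hclosed.closure_eq, hdense.closure_eq]; trivial
  exact ⟨g, hg, hgb⟩

theorem eq_of_apply_eq_of_commute {G : Set (X ≃ₜ X)}
    (habel : ∀ g h : X ≃ₜ X, g ∈ G → h ∈ G → g * h = h * g)
    {p : X} (htrans : ∀ b : X, ∃ k ∈ G, k p = b)
    {g h : X ≃ₜ X} (hg : g ∈ G) (hh : h ∈ G) (hgh : g p = h p) : g = h := by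
  ext x
  obtain ⟨k, hk, rfl⟩ := htrans x
  calc g (k p) = (g * k) p := rfl
    _ = k (g p) := by rw [habel g k hg hk]; rfl
    _ = k (h p) := by rw [hgh]
    _ = (h * k) p := by rw [habel h k hh hk]; rfl

theorem isHomeomorph_subtype_apply [T2Space X] {G : Set (X ≃ₜ X)} (hG : IsCompact G) {p : X}
    (hinj : ∀ g h : X ≃ₜ X, g ∈ G → h ∈ G → g p = h p → g = h)
    (hsurj : ∀ b : X, ∃ g ∈ G, g p = b) :
    IsHomeomorph fun g : G => g.1 p := by
  have : CompactSpace G := isCompact_iff_compactSpace.mp hG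
  refine isHomeomorph_iff_continuous_bijective.mpr
    ⟨(continuous_eval_const p).comp continuous_subtype_val, fun g h hgh => ?_, fun b => ?_⟩
  · exact Subtype.ext (hinj g h g.2 h.2 hgh)
  · obtain ⟨g, hg, rfl⟩ := hsurj b
    exact ⟨⟨g, hg⟩, rfl⟩

end Homeomorph

theorem abelian_closure_group_free_transitive_general {X : Type*} [TopologicalSpace X]
    [T2Space X]
    (L : ℕ) (ρ : Fin L → (X ≃ₜ X))
    (hprim : ∀ U : Set X, IsOpen U → U.Nonempty →
      ∃ p : ℕ, 1 ≤ p ∧ ∀ a : X, ∃ i : Fin p → Fin L,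
        (List.ofFn i).foldr (fun j x => ρ j x) a ∈ U)
    (G : Set (X ≃ₜ X))
    (hG : G = closure ((Subgroup.closure (Set.range ρ) : Subgroup (X ≃ₜ X)) :
      Set (X ≃ₜ X)))
    (hGcpt : IsCompact G)
    (habel : ∀ g h : X ≃ₜ X, g ∈ G → h ∈ G → g * h = h * g) :
    (∀ g : X ≃ₜ X, g ∈ G → ∀ a : X, g a = a → g = 1) ∧
    (∀ a b : X, ∃ g ∈ G, g a = b) ∧
    (∀ p : X, IsHomeomorph (fun g : {g : X ≃ₜ X // g ∈ G} => g.1 p)) ∧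
    (∀ (j : Fin L) (p : X) (g : {g : X ≃ₜ X // g ∈ G}),
      ρ j (g.1 p) = (ρ j * g.1) p) := by
  have hsub : (Subgroup.closure (Set.range ρ) : Set (X ≃ₜ X)) ⊆ G := hG ▸ subset_closure
  have hdense := Homeomorph.dense_image_apply_closure_of_primitive ρ fun U hU hne =>
    (hprim U hU hne).imp fun _ => And.right
  have htrans : ∀ a b : X, ∃ g ∈ G, g a = b := fun a =>
    Homeomorph.exists_mem_apply_eq_of_dense hGcpt hsub (hdense a)
  have hinj : ∀ p : X, ∀ g h : X ≃ₜ X, g ∈ G → h ∈ G → g p = h p → g = h :=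
    fun p _ _ => Homeomorph.eq_of_apply_eq_of_commute habel (htrans p)
  exact ⟨fun g hg a hga => hinj a g 1 hg (hsub (one_mem _)) hga, htrans,
    fun p => Homeomorph.isHomeomorph_subtype_apply hGcpt (hinj p) (htrans p), fun _ _ _ => rfl⟩

/-- Let `ρ` be a primitive, compactly bijective substitution
on a compact Hausdorff space `X` whose closure group `𝒢` (of the group
generated by the columns, in the compact-open topology) is abelian.  Then the
action of `𝒢` on `X` is free and transitive; in particular, for every `p` the
evaluation map `𝒢 → X`, `g ↦ g p`, is a homeomorphism, and under this
identification every column acts as a group translation: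
`ρ_j (g p) = (ρ_j · g) p`. -/
theorem abelian_closure_group_free_transitive {X : Type*} [TopologicalSpace X]
    [CompactSpace X] [T2Space X]
    (L : ℕ) (hL : 1 ≤ L) (ρ : Fin L → (X ≃ₜ X))
    (hprim : ∀ U : Set X, IsOpen U → U.Nonempty →
      ∃ p : ℕ, 1 ≤ p ∧ ∀ a : X, ∃ i : Fin p → Fin L,
        (List.ofFn i).foldr (fun j x => ρ j x) a ∈ U)
    (G : Set (X ≃ₜ X))
    (hG : G = closure ((Subgroup.closure (Set.range ρ) : Subgroup (X ≃ₜ X)) :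
      Set (X ≃ₜ X)))
    (hGcpt : IsCompact G)
    (habel : ∀ g h : X ≃ₜ X, g ∈ G → h ∈ G → g * h = h * g) :
    (∀ g : X ≃ₜ X, g ∈ G → ∀ a : X, g a = a → g = 1) ∧
    (∀ a b : X, ∃ g ∈ G, g a = b) ∧
    (∀ p : X, IsHomeomorph (fun g : {g : X ≃ₜ X // g ∈ G} => g.1 p)) ∧
    (∀ (j : Fin L) (p : X) (g : {g : X ≃ₜ X // g ∈ G}),
      ρ j (g.1 p) = (ρ j * g.1) p) :=
  abelian_closure_group_free_transitive_general L ρ hprim G hG hGcpt habel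
end

section
/- Let 𝒜 be a compact Hausdorff abelian topological group, L ≥ 2, β_0, …, β_{L−1} ∈ 𝒜, 0 ≤ s ≤ L−1, and let w : ℤ → 𝒜 satisfy w_{Lm+k−s} = w_m β_k for all m ∈ ℤ and 0 ≤ k ≤ L−1. Let χ be a unitary character of 𝒜 and assume the autocorrelation coefficient η(1) exists. If χ(β_0) ≠ χ(β_{L−1}), then |η(1)| < 1. -/
open Finset Filter Topology ComplexConjugate

/-!
Write `c_j = χ(w_j) · conj χ(w_{j+1})`. On a block `Lm - s, …, Lm + L - 1 - s` of the pseudo-fixed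
point the factor `χ(w_m)` cancels in every `c_j` except the one straddling the next block, so the
block sum is `C + d · c_m` with `C = Σ_{k<L-1} χ(β_k) conj χ(β_{k+1})` and
`d = χ(β_{L-1}) conj χ(β_0)`. The blocks with `|m| ≤ N` cover the window `|j| ≤ LN` up to `L - 1`
terms, so dividing by `2N + 1` and letting `N → ∞` gives `L η(1) = C + d η(1)`. Hence
`|η(1)| |L - d| = |C| ≤ L - 1 < |L - d|`, the last inequality because `d` is a unit complex number
different from `1`, which is what `χ(β_0) ≠ χ(β_{L-1})` says.
-/

/-- `AutoCorr χ w m z` says that the autocorrelation coefficient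
`η(m) = lim_{N→∞} (1/(2N+1)) Σ_{j=−N}^{N} χ(w_j)·conj(χ(w_{j+m}))`
exists and equals `z`. -/
def AutoCorr {A : Type*} (χ : A → ℂ) (w : ℤ → A) (m : ℤ) (z : ℂ) : Prop :=
  Filter.Tendsto (fun N : ℕ =>
      (∑ j ∈ Finset.Icc (-(N : ℤ)) (N : ℤ),
          χ (w j) * (starRingEnd ℂ) (χ (w (j + m)))) / (2 * (N : ℂ) + 1))
    Filter.atTop (nhds z)

theorem Finset.sum_range_mul_eq_sum_sum {M : Type*} [AddCommMonoid M] (g : ℕ → M) (L n : ℕ) :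
    ∑ j ∈ range (L * n), g j = ∑ i ∈ range n, ∑ k ∈ range L, g (L * i + k) := by
  induction n with
  | zero => simp
  | succ n ih => rw [Nat.mul_succ, sum_range_add, ih, sum_range_succ]

theorem Finset.sum_Icc_neg_natCast {M : Type*} [AddCommMonoid M] (g : ℤ → M) (N : ℕ) :
    ∑ j ∈ Icc (-(N : ℤ)) N, g j = ∑ i ∈ range (2 * N + 1), g (-N + i) := by
  rw [Int.Icc_eq_finset_map, sum_map, show ((N : ℤ) + 1 - -N).toNat = 2 * N + 1 by omega]
  rfl

theorem norm_sum_range_add_add_sub_le {E : Type*} [SeminormedAddCommGroup E] {g : ℕ → E}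
    (hg : ∀ j, ‖g j‖ ≤ 1) (p q r : ℕ) :
    ‖∑ j ∈ range (p + q + r), g j - ∑ j ∈ range q, g (p + j)‖ ≤ p + r := by
  rw [sum_range_add, sum_range_add, add_sub_right_comm, add_sub_cancel_right]
  calc _ ≤ ‖∑ j ∈ range p, g j‖ + ‖∑ j ∈ range r, g (p + q + j)‖ := norm_add_le _ _
    _ ≤ p + r := by
      gcongr <;> exact (norm_sum_le_of_le _ fun j _ => hg _).trans (by simp)

def corrTerm (u : ℤ → ℂ) (j : ℤ) : ℂ := u j * conj (u (j + 1))

section PseudoFixed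

variable {u : ℤ → ℂ} {b : ℕ → ℂ} {L s : ℕ}

theorem sum_range_corrTerm_block (hu : ∀ j, ‖u j‖ = 1) (hL : 0 < L)
    (hub : ∀ m : ℤ, ∀ k < L, u (L * m + k - s) = u m * b k) (m : ℤ) :
    ∑ k ∈ range L, corrTerm u (L * m + k - s) =
      ∑ k ∈ range (L - 1), b k * conj (b (k + 1)) + b (L - 1) * conj (b 0) * corrTerm u m := by
  have hunit : u m * conj (u m) = 1 := by
    rw [Complex.mul_conj', hu m]
    norm_num
  obtain ⟨n, rfl⟩ : ∃ n, L = n + 1 := ⟨L - 1, by omega⟩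
  rw [sum_range_succ, Nat.add_sub_cancel]
  congr 1
  · refine sum_congr rfl fun k hk => ?_
    have hk := mem_range.1 hk
    have hidx : (↑(n + 1) * m + k - s + 1 : ℤ) = ↑(n + 1) * m + ↑(k + 1) - s := by push_cast; ring
    rw [corrTerm, hidx, hub m k (by omega), hub m (k + 1) (by omega), map_mul]
    linear_combination b k * conj (b (k + 1)) * hunit
  · have hidx : (↑(n + 1) * m + n - s + 1 : ℤ) = ↑(n + 1) * (m + 1) + ↑(0 : ℕ) - s := by
      push_cast; ring
    rw [corrTerm, hidx, hub m n (by omega), hub (m + 1) 0 (by omega), map_mul, corrTerm]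
    ring

theorem norm_sum_Icc_corrTerm_mul_sub_le (hu : ∀ j, ‖u j‖ = 1) (hs : s < L)
    (hub : ∀ m : ℤ, ∀ k < L, u (L * m + k - s) = u m * b k) (N : ℕ) :
    ‖∑ j ∈ Icc (-((L * N : ℕ) : ℤ)) (L * N : ℕ), corrTerm u j -
        ((2 * N + 1) * ∑ k ∈ range (L - 1), b k * conj (b (k + 1)) +
          b (L - 1) * conj (b 0) * ∑ j ∈ Icc (-(N : ℤ)) N, corrTerm u j)‖ ≤ L - 1 := by
  have hblocks : ∑ m ∈ Icc (-(N : ℤ)) N, ∑ k ∈ range L, corrTerm u (L * m + k - s) =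
      (2 * N + 1) * ∑ k ∈ range (L - 1), b k * conj (b (k + 1)) +
          b (L - 1) * conj (b 0) * ∑ j ∈ Icc (-(N : ℤ)) N, corrTerm u j := by
    rw [sum_congr rfl fun m _ => sum_range_corrTerm_block hu (by omega) hub m, sum_add_distrib,
      sum_const, Int.card_Icc, ← mul_sum, show ((N : ℤ) + 1 - -N).toNat = 2 * N + 1 by omega,
      nsmul_eq_mul]
    push_cast
    ring
  have hlen : L * (2 * N + 1) = s + (2 * (L * N) + 1) + (L - 1 - s) := by
    rw [mul_add, mul_one, mul_left_comm]; omega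
  have hwindow : ∑ m ∈ Icc (-(N : ℤ)) N, ∑ k ∈ range L, corrTerm u (L * m + k - s) =
      ∑ j ∈ range (s + (2 * (L * N) + 1) + (L - 1 - s)), corrTerm u (-(L * N : ℕ) - s + j) := by
    rw [sum_Icc_neg_natCast, ← hlen, sum_range_mul_eq_sum_sum]
    refine sum_congr rfl fun i _ => sum_congr rfl fun k _ => congrArg _ ?_
    push_cast
    ring
  have hcentre : ∑ j ∈ Icc (-((L * N : ℕ) : ℤ)) (L * N : ℕ), corrTerm u j =
      ∑ j ∈ range (2 * (L * N) + 1), corrTerm u (-(L * N : ℕ) - s + ↑(s + j)) := by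
    rw [sum_Icc_neg_natCast]
    refine sum_congr rfl fun j _ => congrArg _ ?_
    push_cast
    ring
  rw [hcentre, ← hblocks, hwindow, norm_sub_rev]
  have := norm_sum_range_add_add_sub_le (g := fun j : ℕ => corrTerm u (-(L * N : ℕ) - s + j))
    (fun j => by simp [corrTerm, hu]) s (2 * (L * N) + 1) (L - 1 - s)
  refine this.trans_eq ?_
  rw [Nat.cast_sub (by omega), Nat.cast_sub (by omega)]
  ring

end PseudoFixed

theorem tendsto_inv_two_mul_add_one :
    Tendsto (fun N : ℕ => (2 * (N : ℂ) + 1)⁻¹) atTop (𝓝 0) := by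
  have h : Tendsto (fun N : ℕ => 2 * N + 1) atTop atTop :=
    tendsto_atTop_mono (fun N => (by omega : N ≤ 2 * N + 1)) tendsto_id
  exact ((tendsto_inv_atTop_nhds_zero_nat (𝕜 := ℂ)).comp h).congr fun N => by simp

theorem tendsto_div_two_mul_add_one_of_norm_le {e : ℕ → ℂ} {B : ℝ} (he : ∀ N, ‖e N‖ ≤ B) :
    Tendsto (fun N : ℕ => e N / (2 * N + 1)) atTop (𝓝 0) := by
  simp_rw [div_eq_inv_mul]
  exact tendsto_inv_two_mul_add_one.zero_mul_isBoundedUnder_le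
    (isBoundedUnder_of ⟨B, fun N => he N⟩)

theorem two_mul_natCast_add_one_ne_zero (N : ℕ) : (2 * (N : ℂ) + 1) ≠ 0 := by
  exact_mod_cast (2 * N).succ_ne_zero

theorem mul_eq_add_mul_of_tendsto_of_norm_sub_le {S : ℕ → ℂ} {η C d : ℂ} {L : ℕ} {B : ℝ}
    (hL : 0 < L) (hS : Tendsto (fun N : ℕ => S N / (2 * N + 1)) atTop (𝓝 η))
    (hscale : ∀ N : ℕ, ‖S (L * N) - ((2 * N + 1) * C + d * S N)‖ ≤ B) :
    (L : ℂ) * η = C + d * η := by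
  have hLN : Tendsto (fun N : ℕ => L * N) atTop atTop :=
    tendsto_atTop_mono (fun N => Nat.le_mul_of_pos_left N hL) tendsto_id
  have hratio : Tendsto (fun N : ℕ => (L : ℂ) - (L - 1) / (2 * N + 1)) atTop (𝓝 L) := by
    simpa using tendsto_const_nhds.sub (tendsto_div_two_mul_add_one_of_norm_le fun _ => le_rfl)
  have hleft : Tendsto (fun N : ℕ => S (L * N) / (2 * N + 1)) atTop (𝓝 (η * L)) := by
    refine ((hS.comp hLN).mul hratio).congr fun N => ?_
    have h1 := two_mul_natCast_add_one_ne_zero N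
    have h2 := two_mul_natCast_add_one_ne_zero (L * N)
    push_cast at h2
    simp only [Function.comp_apply, Nat.cast_mul]
    rw [div_mul_eq_mul_div, eq_div_iff h1, div_mul_eq_mul_div, div_eq_iff h2]
    field_simp
    ring
  have hright : Tendsto (fun N : ℕ => S (L * N) / (2 * N + 1)) atTop (𝓝 (C + d * η)) := by
    have hlim := ((tendsto_const_nhds (x := C)).add (hS.const_mul d)).add
      (tendsto_div_two_mul_add_one_of_norm_le hscale)
    rw [add_zero] at hlim
    refine hlim.congr fun N => ?_
    have := two_mul_natCast_add_one_ne_zero N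
    field_simp
    ring
  exact (mul_comm _ _).trans (tendsto_nhds_unique hleft hright)

theorem Complex.re_lt_one_of_norm_eq_one {d : ℂ} (hd : ‖d‖ = 1) (hd1 : d ≠ 1) : d.re < 1 := by
  refine (hd ▸ d.re_le_norm).lt_of_ne fun hre => hd1 (Complex.ext hre ?_)
  exact Complex.abs_re_eq_norm.1 (by rw [hre, hd, abs_one])

theorem Complex.sub_one_lt_norm_sub {d : ℂ} (hd : ‖d‖ = 1) (hd1 : d ≠ 1) {r : ℝ} (hr : 0 < r) :
    r - 1 < ‖(r : ℂ) - d‖ := by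
  have hre := Complex.re_lt_one_of_norm_eq_one hd hd1
  have hd2 : d.re * d.re + d.im * d.im = 1 := by
    rw [← Complex.normSq_apply, Complex.normSq_eq_norm_sq, hd, one_pow]
  have hsq : ‖(r : ℂ) - d‖ ^ 2 = r ^ 2 - 2 * r * d.re + 1 := by
    rw [← Complex.normSq_eq_norm_sq, Complex.normSq_apply]
    simp only [Complex.sub_re, Complex.ofReal_re, Complex.sub_im, Complex.ofReal_im]
    linear_combination hd2
  have hsq_lt : (r - 1) ^ 2 < ‖(r : ℂ) - d‖ ^ 2 := by
    rw [hsq]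
    nlinarith
  exact (le_abs_self _).trans_lt (abs_lt_of_sq_lt_sq hsq_lt (norm_nonneg _))

theorem norm_lt_one_of_mul_eq_add_mul {r : ℝ} {η C d : ℂ} (hr : 0 < r) (hC : ‖C‖ ≤ r - 1)
    (hd : ‖d‖ = 1) (hd1 : d ≠ 1) (h : (r : ℂ) * η = C + d * η) : ‖η‖ < 1 := by
  have hlt := Complex.sub_one_lt_norm_sub hd hd1 hr
  have hfactor : ‖η‖ * ‖(r : ℂ) - d‖ = ‖C‖ := by
    rw [← norm_mul]
    congr 1
    linear_combination h
  exact (mul_lt_iff_lt_one_left (b := ‖(r : ℂ) - d‖) (by linarith [norm_nonneg C])).1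
    (by linarith)

/-- For a pseudo-fixed point `w` of a bijective abelian
substitution of constant length `L` with columns `θ ↦ θβ_k` and shift `s`,
weighted by a unitary character `χ`: if `χ(β_0) ≠ χ(β_{L−1})` and `η(1)`
exists, then `|η(1)| < 1`. -/
theorem eta_one_lt_one_of_distinct_columns {A : Type*} [CommGroup A]
    (L : ℕ) (hL : 2 ≤ L) (β : Fin L → A) (s : ℕ) (hs : s ≤ L - 1)
    (w : ℤ → A)
    (hw : ∀ (m : ℤ) (k : Fin L),
      w ((L : ℤ) * m + (k : ℤ) - (s : ℤ)) = w m * β k)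
    (χ : A →* ℂ)
    (hχunit : ∀ a : A, ‖χ a‖ = 1)
    (η1 : ℂ) (hη1 : AutoCorr χ w 1 η1)
    (hne : χ (β ⟨0, by omega⟩) ≠ χ (β ⟨L - 1, by omega⟩)) :
    ‖η1‖ < 1 := by
  set b : ℕ → ℂ := fun k => if hk : k < L then χ (β ⟨k, hk⟩) else 1 with hb_def
  have hb : ∀ k (hk : k < L), b k = χ (β ⟨k, hk⟩) := fun k hk => dif_pos hk
  have hb_norm : ∀ k, ‖b k‖ = 1 := fun k => by
    simp only [hb_def]; split_ifs <;> simp [hχunit]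
  have hub : ∀ m : ℤ, ∀ k < L, χ (w (L * m + k - s)) = χ (w m) * b k := fun m k hk => by
    rw [hb k hk, ← map_mul, ← hw m ⟨k, hk⟩]
  have hkey := mul_eq_add_mul_of_tendsto_of_norm_sub_le (by omega) hη1
    (norm_sum_Icc_corrTerm_mul_sub_le (u := fun j => χ (w j)) (fun j => hχunit _) (by omega) hub)
  refine norm_lt_one_of_mul_eq_add_mul (r := L) (by positivity) ?_ ?_ ?_ (by exact_mod_cast hkey)
  · calc ‖∑ k ∈ range (L - 1), b k * conj (b (k + 1))‖ ≤ ∑ k ∈ range (L - 1), 1 :=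
          norm_sum_le_of_le _ fun k _ => by simp [hb_norm]
      _ = L - 1 := by simp [Nat.cast_sub (by omega : 1 ≤ L)]
  · simp [hb_norm]
  · have hb0 : b 0 ≠ 0 := norm_ne_zero_iff.1 (by simp [hb_norm])
    rw [← RCLike.inv_eq_conj (hb_norm 0), Ne, mul_inv_eq_one₀ hb0, hb 0 (by omega),
      hb (L - 1) (by omega)]
    exact hne.symm
end
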